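/- arXiv:2412.20917 — 3 statements merged into one kernel-verified Lean document; each statement's English description precedes it below -/
import Mathlib

section
/- (Matheron's inequality) For every nonempty bounded convex set Ω in ℝⁿ and every t ∈ (0, r(Ω)), the Lebesgue measure of the inner parallel body satisfies |Ω_{-t}| ≥ |Ω| · (1 - t/r(Ω))ⁿ. -/
open Metric MeasureTheory Filter Pointwise

/-- The inner parallel body `Ω_{-t} = {x : closedBall x t ⊆ Ω}`. -/
def innerBody {n : ℕ} (Ω : Set (EuclideanSpace ℝ (Fin n))) (t : ℝ) :
    Set (EuclideanSpace ℝ (Fin n)) :=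
  {x | Metric.closedBall x t ⊆ Ω}

/-- The inradius: the supremum of radii of closed balls contained in the set. -/
noncomputable def inradius {n : ℕ} (Ω : Set (EuclideanSpace ℝ (Fin n))) : ℝ :=
  sSup {ρ : ℝ | ∃ x, Metric.closedBall x ρ ⊆ Ω}

lemma matheron_key {n : ℕ} (Ω : Set (EuclideanSpace ℝ (Fin n))) (hconv : Convex ℝ Ω)
    (c : EuclideanSpace ℝ (Fin n)) (ρ t : ℝ) (hball : Metric.closedBall c ρ ⊆ Ω)
    (ht0 : 0 < t) (htρ : t < ρ) :
    volume Ω * ENNReal.ofReal ((1 - t / ρ) ^ n) ≤ volume (innerBody Ω t) := by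
  have hρ0 : 0 < ρ := ht0.trans htρ
  set l := t / ρ with hl
  have hl0 : 0 < l := div_pos ht0 hρ0
  have hl1 : l < 1 := (div_lt_one hρ0).2 htρ
  have hsub : (l • c) +ᵥ ((1 - l) • Ω) ⊆ innerBody Ω t := by
    rintro y hy
    rw [Set.mem_vadd_set] at hy
    obtain ⟨x', ⟨x, hx, rfl⟩, rfl⟩ := hy
    intro y hy
    have hdist : ‖y - (l • c + (1 - l) • x)‖ ≤ t := by
      rw [Metric.mem_closedBall, dist_eq_norm] at hy
      simpa [vadd_eq_add] using hy
    set z : EuclideanSpace ℝ (Fin n) := l⁻¹ • (y - (1 - l) • x) with hz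
    have hyz : y = (1 - l) • x + l • z := by
      rw [hz, smul_inv_smul₀ hl0.ne']; abel
    have hzball : z ∈ Metric.closedBall c ρ := by
      rw [Metric.mem_closedBall, dist_eq_norm]
      have : z - c = l⁻¹ • (y - (l • c + (1 - l) • x)) := by
        simp only [hz, smul_sub, smul_add, smul_smul]
        rw [inv_mul_cancel₀ hl0.ne', one_smul]
        abel
      rw [this, norm_smul, norm_inv, Real.norm_eq_abs, abs_of_pos hl0]
      calc l⁻¹ * ‖y - (l • c + (1 - l) • x)‖ ≤ l⁻¹ * t := by
            exact mul_le_mul_of_nonneg_left hdist (inv_nonneg.2 hl0.le)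
        _ = ρ := by rw [hl]; field_simp [ht0.ne', hρ0.ne']
    have : y ∈ Ω := by
      rw [hyz]
      exact hconv hx (hball hzball) (by linarith) hl0.le (by ring)
    exact this
  calc volume Ω * ENNReal.ofReal ((1 - l) ^ n)
      = volume ((l • c) +ᵥ ((1 - l) • Ω)) := by
        rw [measure_vadd, Measure.addHaar_smul, finrank_euclideanSpace_fin,
          abs_of_nonneg (pow_nonneg (by linarith) n), mul_comm]
    _ ≤ volume (innerBody Ω t) := measure_mono hsub

/-- Matheron's inequality: `|Ω_{-t}| ≥ |Ω| (1 - t/r(Ω))ⁿ` for `t ∈ (0, r(Ω))`. -/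
theorem matheron {n : ℕ} (Ω : Set (EuclideanSpace ℝ (Fin n)))
    (hne : Ω.Nonempty) (hbd : Bornology.IsBounded Ω) (hconv : Convex ℝ Ω)
    (t : ℝ) (ht : t ∈ Set.Ioo 0 (inradius Ω)) :
    volume Ω * ENNReal.ofReal ((1 - t / inradius Ω) ^ n) ≤ volume (innerBody Ω t) := by
  obtain ⟨ht0, htr⟩ := ht
  set r := inradius Ω with hr
  have hr0 : 0 < r := ht0.trans htr
  have hS_ne : {ρ : ℝ | ∃ x, Metric.closedBall x ρ ⊆ Ω}.Nonempty := by
    refine ⟨-1, hne.some, ?_⟩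
    rw [Metric.closedBall_eq_empty.2 (by norm_num)]
    exact Set.empty_subset _
  have key : ∀ ρ ∈ Set.Ioo t r,
      volume Ω * ENNReal.ofReal ((1 - t / ρ) ^ n) ≤ volume (innerBody Ω t) := by
    rintro ρ ⟨h1, h2⟩
    obtain ⟨ρ', ⟨x, hx⟩, hρρ'⟩ := exists_lt_of_lt_csSup hS_ne h2
    exact matheron_key Ω hconv x ρ t
      ((Metric.closedBall_subset_closedBall hρρ'.le).trans hx) ht0 h1
  have hcont : Tendsto (fun ρ : ℝ => volume Ω * ENNReal.ofReal ((1 - t / ρ) ^ n))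
      (nhdsWithin r (Set.Ioo t r)) (nhds (volume Ω * ENNReal.ofReal ((1 - t / r) ^ n))) := by
    apply ENNReal.Tendsto.const_mul
    · apply (ENNReal.continuous_ofReal.tendsto _).comp
      apply tendsto_nhdsWithin_of_tendsto_nhds
      exact ((continuousAt_const.sub
        (continuousAt_const.div continuousAt_id hr0.ne')).pow n).tendsto
    · exact Or.inr hbd.measure_lt_top.ne
  haveI := right_nhdsWithin_Ioo_neBot htr
  exact le_of_tendsto hcont (eventually_mem_nhdsWithin.mono key)
end

section
/- Let Ω = K ∪ R ⊆ ℝ² with K = [0,1]² and R = [1,2]×[1-ε,1], 0 < ε < 1/2. Assume h(Ω_{-t}) = h(K_{-t}) = (2+√π)/(1-2t) and |Ω_{-t}| = |K_{-t}| + (ε-2t)(1-t) for small t > 0, and |K_{-t}|·h(K_{-t})² = |K|·h(K)² = (2+√π)². Then the function t ↦ |Ω_{-t}|·h(Ω_{-t})² has derivative (2+√π)²·(3ε-2) < 0 at t = 0⁺; in particular for all sufficiently small t > 0, √|Ω_{-t}|·h(Ω_{-t}) < √|Ω|·h(Ω). -/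
open Real Filter

/-- The counterexample computation for the tailed non-convex set: with
`g(t) = ((1-2t)² + (ε-2t)(1-t))·((2+√π)/(1-2t))²` (which equals `|Ω_{-t}|·h(Ω_{-t})²`),
`g` has right derivative `(2+√π)²·(3ε-2) < 0` at `0`, and `g(t) < g(0)` for all small
`t > 0`; in particular `√|Ω_{-t}|·h(Ω_{-t}) < √|Ω|·h(Ω)` for small `t > 0`. -/
theorem tailed_set_counterexample (ε : ℝ) (hε : ε ∈ Set.Ioo (0 : ℝ) (1 / 2)) :
    HasDerivWithinAt
      (fun t : ℝ => ((1 - 2 * t) ^ 2 + (ε - 2 * t) * (1 - t)) *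
        ((2 + Real.sqrt π) / (1 - 2 * t)) ^ 2)
      ((2 + Real.sqrt π) ^ 2 * (3 * ε - 2)) (Set.Ici 0) 0
    ∧ (2 + Real.sqrt π) ^ 2 * (3 * ε - 2) < 0
    ∧ ∀ᶠ t in nhdsWithin (0 : ℝ) (Set.Ioi 0),
        ((1 - 2 * t) ^ 2 + (ε - 2 * t) * (1 - t)) *
          ((2 + Real.sqrt π) / (1 - 2 * t)) ^ 2 <
        (1 + ε) * (2 + Real.sqrt π) ^ 2 := by
  have hsq : (0:ℝ) ≤ Real.sqrt π := Real.sqrt_nonneg _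
  set c : ℝ := 2 + Real.sqrt π with hc
  have hlin : HasDerivAt (fun t : ℝ => 1 - 2 * t) (-2) 0 := by
    simpa using ((hasDerivAt_id (0:ℝ)).const_mul 2).const_sub 1
  have hA : HasDerivAt (fun t : ℝ => (1 - 2 * t) ^ 2 + (ε - 2 * t) * (1 - t))
      (-6 - ε) 0 := by
    have h1 : HasDerivAt (fun t : ℝ => (1 - 2 * t) ^ 2) (-4) 0 := by
      have := hlin.fun_pow 2
      norm_num at this; simpa using this
    have h2 : HasDerivAt (fun t : ℝ => (ε - 2 * t) * (1 - t)) (-2 - ε) 0 := by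
      have ha : HasDerivAt (fun t : ℝ => ε - 2 * t) (-2) 0 := by
        simpa using ((hasDerivAt_id (0:ℝ)).const_mul 2).const_sub ε
      have hb : HasDerivAt (fun t : ℝ => 1 - t) (-1) 0 := by
        simpa using (hasDerivAt_id (0:ℝ)).const_sub 1
      have := ha.fun_mul hb
      norm_num at this; exact this.congr_deriv (by ring)
    have := h1.fun_add h2
    exact this.congr_deriv (by ring)
  have hB : HasDerivAt (fun t : ℝ => (c / (1 - 2 * t)) ^ 2) (4 * c ^ 2) 0 := by
    have hq : HasDerivAt (fun t : ℝ => c / (1 - 2 * t)) (2 * c) 0 := by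
      have := (hasDerivAt_const (0:ℝ) c).fun_div hlin (by norm_num)
      norm_num at this; exact this.congr_deriv (by ring)
    have := hq.fun_pow 2
    norm_num at this; exact this.congr_deriv (by ring)
  have hg : HasDerivAt
      (fun t : ℝ => ((1 - 2 * t) ^ 2 + (ε - 2 * t) * (1 - t)) *
        ((c / (1 - 2 * t)) ^ 2)) (c ^ 2 * (3 * ε - 2)) 0 := by
    have := hA.fun_mul hB
    exact this.congr_deriv (by
    norm_num; ring)
  have hderiv := hg.hasDerivWithinAt (s := Set.Ici (0:ℝ))
  have hcpos : (0:ℝ) < c := by positivity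
  have hneg : c ^ 2 * (3 * ε - 2) < 0 := by
    have h2 : 3 * ε - 2 < 0 := by linarith [hε.2]
    exact mul_neg_of_pos_of_neg (pow_pos hcpos 2) h2
  refine ⟨hderiv, hneg, ?_⟩
  have hderiv' := hg.hasDerivWithinAt (s := Set.Ioi (0:ℝ))
  have hslope := hasDerivWithinAt_iff_tendsto_slope.mp hderiv'
  have hIoi : Set.Ioi (0:ℝ) \ {0} = Set.Ioi 0 :=
    Set.diff_singleton_eq_self (by simp)
  rw [hIoi] at hslope
  have hev : ∀ᶠ t in nhdsWithin (0:ℝ) (Set.Ioi 0),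
      slope (fun t : ℝ => ((1 - 2 * t) ^ 2 + (ε - 2 * t) * (1 - t)) *
        ((c / (1 - 2 * t)) ^ 2)) 0 t < 0 :=
    hslope.eventually_lt_const hneg
  filter_upwards [hev, self_mem_nhdsWithin] with t ht htpos
  have htpos' : (0:ℝ) < t := htpos
  rw [slope_def_field] at ht
  have hf0 : ((1 - 2 * (0:ℝ)) ^ 2 + (ε - 2 * 0) * (1 - 0)) *
      ((c / (1 - 2 * 0)) ^ 2) = (1 + ε) * c ^ 2 := by norm_num <;> ring
  have := div_neg_iff.mp (by simpa [hf0] using ht)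
  rcases this with ⟨h1, h2⟩ | ⟨h1, h2⟩
  · linarith
  · linarith
end

section
/- If Ω ∈ 𝒦ⁿ is a convex body whose Cheeger set C^Ω satisfies h(Ω) = P(C^Ω)/|C^Ω|, and the map t ↦ h(Ω_t) is differentiable at 0 with derivative (1/|C^Ω|)·∫_{∂C^Ω ∩ ∂Ω}(κ - h(Ω)) dℋ^{n-1}, and h(Ω_t)⁻¹ ≥ h(Ω)⁻¹ + t/n for all t ≥ 0, and κ ≥ 0 on ∂C^Ω ∩ ∂Ω, then ℋ^{n-1}(∂C^Ω ∩ ∂Ω) ≥ (1/n)·ℋ^{n-1}(∂C^Ω). -/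
open MeasureTheory Set

/-- Contact-surface estimate in any dimension: given the derivative formula for
`f(t) = h(Ω_t)` at `0`, the Brunn–Minkowski consequence `h(Ω_t)⁻¹ ≥ h(Ω)⁻¹ + t/n`, and the
nonnegativity of the mean curvature `κ` on `∂C^Ω ∩ ∂Ω`, one gets
`ℋ^{n-1}(∂C^Ω ∩ ∂Ω) ≥ (1/n)·ℋ^{n-1}(∂C^Ω)`. -/
theorem contact_surface_estimate
    (n : ℕ) (hn : 2 ≤ n)
    (Ω C : Set (EuclideanSpace ℝ (Fin n)))
    (hne : Ω.Nonempty) (hbd : Bornology.IsBounded Ω) (hconv : Convex ℝ Ω)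
    (hCΩ : C ⊆ Ω)
    (κ : EuclideanSpace ℝ (Fin n) → ℝ) (f : ℝ → ℝ)
    (hvolC : 0 < (volume C).toReal)
    -- (i)  `C` is the Cheeger set: `h(Ω) = P(C)/|C|` with `P(C) = ℋ^{n-1}(∂C)`
    (hcheeger : f 0 = (μH[(n : ℝ) - 1] (frontier C)).toReal / (volume C).toReal)
    (hfpos : 0 < f 0)
    -- (ii) derivative formula for `t ↦ h(Ω_t)` at `t = 0`
    (hderiv : HasDerivWithinAt f
      ((1 / (volume C).toReal) *
        ∫ x in frontier C ∩ frontier Ω, (κ x - f 0) ∂(μH[(n : ℝ) - 1]))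
      (Set.Ici 0) 0)
    -- (iii) Brunn–Minkowski consequence
    (hBM : ∀ t : ℝ, 0 ≤ t → (f 0)⁻¹ + t / n ≤ (f t)⁻¹)
    -- (iv) nonnegativity of the mean curvature on the contact surface
    (hκ : ∀ x ∈ frontier C ∩ frontier Ω, 0 ≤ κ x) :
    (1 / n : ℝ) * (μH[(n : ℝ) - 1] (frontier C)).toReal ≤
      (μH[(n : ℝ) - 1] (frontier C ∩ frontier Ω)).toReal := by
  set μ : Measure (EuclideanSpace ℝ (Fin n)) := μH[(n : ℝ) - 1] with hμ
  set S : Set (EuclideanSpace ℝ (Fin n)) := frontier C ∩ frontier Ω with hSdef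
  set V : ℝ := (volume C).toReal with hV
  set I : ℝ := ∫ x in S, (κ x - f 0) ∂μ with hIdef
  have hnpos : (0:ℝ) < n := by
    have : (2:ℝ) ≤ n := by exact_mod_cast hn
    linarith
  have hnne : (n:ℝ) ≠ 0 := ne_of_gt hnpos
  have hf0ne : f 0 ≠ 0 := ne_of_gt hfpos
  -- the comparison function from Brunn–Minkowski
  set g : ℝ → ℝ := fun t => ((f 0)⁻¹ + t / n)⁻¹ with hgdef
  have hg0 : g 0 = f 0 := by simp [hgdef]
  -- derivative of g at 0
  have hc : HasDerivAt (fun t : ℝ => (f 0)⁻¹ + t / n) ((n:ℝ)⁻¹) 0 := by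
    simpa [one_div] using ((hasDerivAt_id (0:ℝ)).div_const (n:ℝ)).const_add ((f 0)⁻¹)
  have hcne : ((f 0)⁻¹ + (0:ℝ) / n) ≠ 0 := by
    have : 0 < (f 0)⁻¹ := inv_pos.2 hfpos
    simp only [zero_div, add_zero]
    exact ne_of_gt this
  have hgderiv : HasDerivAt g (-(f 0 ^ 2 / n)) 0 := by
    have h := hc.inv hcne
    have hval : -((n:ℝ)⁻¹) / ((f 0)⁻¹ + (0:ℝ) / n) ^ 2 = -(f 0 ^ 2 / n) := by
      field_simp
      ring
    rwa [hval] at h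
  -- f ≤ g on [0, ∞)
  have hfle : ∀ t : ℝ, 0 ≤ t → f t ≤ g t := by
    intro t ht
    have h1 := hBM t ht
    have hpos : 0 < (f 0)⁻¹ + t / n := by positivity
    have hftpos : 0 < f t := by
      have : 0 < (f t)⁻¹ := lt_of_lt_of_le hpos h1
      exact inv_pos.1 this
    have := inv_anti₀ hpos h1
    rwa [inv_inv] at this
  -- slopes
  have hslopef : Filter.Tendsto (slope f 0) (nhdsWithin 0 (Set.Ioi 0))
      (nhds ((1 / V) * I)) := by
    have h := hasDerivWithinAt_iff_tendsto_slope.1 hderiv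
    rwa [Set.Ici_sdiff_left] at h
  have hslopeg : Filter.Tendsto (slope g 0) (nhdsWithin 0 (Set.Ioi 0))
      (nhds (-(f 0 ^ 2 / n))) := by
    have h := hasDerivAt_iff_tendsto_slope.1 hgderiv
    exact h.mono_left (nhdsWithin_mono 0 (fun x hx => ne_of_gt hx))
  have hcomp : (1 / V) * I ≤ -(f 0 ^ 2 / n) := by
    refine le_of_tendsto_of_tendsto hslopef hslopeg ?_
    filter_upwards [self_mem_nhdsWithin] with t ht
    have htpos : (0:ℝ) < t := ht
    rw [slope_def_field, slope_def_field, hg0, sub_zero]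
    have := hfle t (le_of_lt htpos)
    have hnum : f t - f 0 ≤ g t - f 0 := by linarith
    exact div_le_div_of_nonneg_right hnum htpos.le
  · -- main conclusion from the derivative inequality
    have hVpos : 0 < V := hvolC
    have hIle : I ≤ -(f 0 ^ 2 * V / n) := by
      have h := mul_le_mul_of_nonneg_left hcomp (le_of_lt hVpos)
      rw [show V * ((1 / V) * I) = I by field_simp] at h
      calc I ≤ V * -(f 0 ^ 2 / n) := h
        _ = -(f 0 ^ 2 * V / n) := by ring
    have hIneg : I < 0 := by
      have hx : 0 < f 0 ^ 2 * V / n := by positivity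
      linarith
    -- integrability
    have hint : IntegrableOn (fun x => κ x - f 0) S μ := by
      by_contra hni
      rw [hIdef] at hIneg
      rw [MeasureTheory.integral_undef hni] at hIneg
      exact lt_irrefl 0 hIneg
    -- case on finiteness of the perimeter measure
    by_cases htop : μ (frontier C) = ⊤
    · rw [htop]
      simp only [ENNReal.toReal_top, mul_zero]
      exact ENNReal.toReal_nonneg
    · have hμS : μ S < ⊤ :=
        lt_of_le_of_lt (measure_mono Set.inter_subset_left) (lt_top_iff_ne_top.2 htop)
      have hSmeas : MeasurableSet S :=
        (isClosed_frontier.inter isClosed_frontier).measurableSet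
      have hint' : IntegrableOn (fun x => f 0 - κ x) S μ := by
        simpa only [Pi.neg_def, neg_sub] using hint.neg
      have hconstint : IntegrableOn (fun _ => f 0) S μ :=
        integrableOn_const hμS.ne
      have hIeq : ∫ x in S, (f 0 - κ x) ∂μ = -I := by
        rw [hIdef, ← MeasureTheory.integral_neg]
        congr 1 with x
        ring
      have hIle2 : ∫ x in S, (f 0 - κ x) ∂μ ≤ ∫ x in S, (f 0) ∂μ := by
        refine setIntegral_mono_on hint' hconstint hSmeas ?_
        intro x hx
        have := hκ x hx
        linarith
      rw [hIeq, MeasureTheory.setIntegral_const, smul_eq_mul] at hIle2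
      have hkey : f 0 ^ 2 * V / n ≤ (μ S).toReal * f 0 := by
        have : -I ≥ f 0 ^ 2 * V / n := by linarith
        change -I ≤ (μ S).toReal * f 0 at hIle2
        linarith
      have hPV : f 0 * V = (μ (frontier C)).toReal := by
        rw [hcheeger]
        field_simp
      have h1 : f 0 * V / n ≤ (μ S).toReal := by
        refine le_of_mul_le_mul_right ?_ hfpos
        calc f 0 * V / ↑n * f 0 = f 0 ^ 2 * V / ↑n := by ring
          _ ≤ (μ S).toReal * f 0 := hkey
      rw [← hPV]
      linarith [h1, show (1 / (n:ℝ)) * (f 0 * V) = f 0 * V / n from by ring]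
end
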